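/- Let T > 0, σ > 0, and let r, q satisfy r > q ≥ 0, r − q − σ²/2 ≠ 0, and r − q − σ² ≠ 0, and set A = (q + 1/T)/(r + 1/T). With m1, m2, α^a, (β^a)² defined as follows for 0 ≤ t ≤ u and x > 0: m1(t,u,x) = x·(t/u)·e^{−(r−q)(u−t)} + (1 − e^{−(r−q)(u−t)})/((r−q)·u); m2(t,u,x) = x²·(t²/u²)·e^{−2(r−q−σ²/2)(u−t)} + x·(2t·e^{−(r−q)(u−t)}/(u²(r−q)))·(1 − e^{−(r−q)(u−t)}) + [(r−q−σ²) − 2(r−q−σ²/2)·e^{−(r−q)(u−t)} + (r−q)·e^{−2(r−q−σ²/2)(u−t)}]/(u²·(r−q)·(r−q−σ²/2)·(r−q−σ²)); α^a = 2·ln m1 − (1/2)·ln m2; (β^a)² = ln m2 − 2·ln m1. Writing a(τ,x) = α^a(T−τ, T, x) and b²(τ,x) = (β^a)²(T−τ, T, x), and assuming b²(τ,A) > 0 for all sufficiently small τ > 0, the following limits hold: (i) lim_{τ→0⁺} [ (∂_τ a)(τ,A)·(∂_x a)(τ,A) + (∂²_{x,τ} a)(τ,A) ] = (1/A)·(q −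 r − 1/T − σ²/2); (ii) lim_{τ→0⁺} (∂_x b²)(τ,A) / (2·√(b²(τ,A))) = 0. -/

import Mathlib

open Real Filter Topology

/-- First conditioned moment `m1(t,u,x)` of the ratio of the continuous arithmetic
average to the asset price. -/
noncomputable def m1 (r q t u x : ℝ) : ℝ :=
  x * (t / u) * Real.exp (-(r - q) * (u - t))
    + (1 - Real.exp (-(r - q) * (u - t))) / ((r - q) * u)

/-- Second conditioned moment `m2(t,u,x)` of the ratio of the continuous arithmetic
average to the asset price. -/
noncomputable def m2 (r q σ t u x : ℝ) : ℝ :=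
  x ^ 2 * (t ^ 2 / u ^ 2) * Real.exp (-2 * (r - q - σ ^ 2 / 2) * (u - t))
    + x * (2 * t * Real.exp (-(r - q) * (u - t)) / (u ^ 2 * (r - q)))
        * (1 - Real.exp (-(r - q) * (u - t)))
    + ((r - q - σ ^ 2) - 2 * (r - q - σ ^ 2 / 2) * Real.exp (-(r - q) * (u - t))
        + (r - q) * Real.exp (-2 * (r - q - σ ^ 2 / 2) * (u - t)))
      / (u ^ 2 * (r - q) * (r - q - σ ^ 2 / 2) * (r - q - σ ^ 2))

/-- `α^a(t,u,x) = 2 ln m1 − (1/2) ln m2`. -/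
noncomputable def alphaA (r q σ t u x : ℝ) : ℝ :=
  2 * Real.log (m1 r q t u x) - (1 / 2) * Real.log (m2 r q σ t u x)

/-- `(β^a)²(t,u,x) = ln m2 − 2 ln m1`. -/
noncomputable def betaA2 (r q σ t u x : ℝ) : ℝ :=
  Real.log (m2 r q σ t u x) - 2 * Real.log (m1 r q t u x)

noncomputable def G1 (r q T A τ : ℝ) : ℝ :=
  A * ((T - τ) / T) * Real.exp (-(r - q) * τ)
    + (1 - Real.exp (-(r - q) * τ)) / ((r - q) * T)

noncomputable def G2 (r q σ T A τ : ℝ) : ℝ :=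
  A ^ 2 * ((T - τ) ^ 2 / T ^ 2) * Real.exp (-2 * (r - q - σ ^ 2 / 2) * τ)
    + A * (2 * (T - τ) * Real.exp (-(r - q) * τ) / (T ^ 2 * (r - q)))
        * (1 - Real.exp (-(r - q) * τ))
    + ((r - q - σ ^ 2) - 2 * (r - q - σ ^ 2 / 2) * Real.exp (-(r - q) * τ)
        + (r - q) * Real.exp (-2 * (r - q - σ ^ 2 / 2) * τ))
      / (T ^ 2 * (r - q) * (r - q - σ ^ 2 / 2) * (r - q - σ ^ 2))

noncomputable def Pf (r q T τ : ℝ) : ℝ := (T - τ) / T * Real.exp (-(r - q) * τ)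

noncomputable def M2X (r q σ T A τ : ℝ) : ℝ :=
  2 * A * ((T - τ) ^ 2 / T ^ 2) * Real.exp (-2 * (r - q - σ ^ 2 / 2) * τ)
    + 2 * (T - τ) * Real.exp (-(r - q) * τ) / (T ^ 2 * (r - q))
        * (1 - Real.exp (-(r - q) * τ))

lemma m1_eq_G1 (r q T A τ : ℝ) : m1 r q (T - τ) T A = G1 r q T A τ := by
  simp only [m1, G1, sub_sub_cancel]

lemma m2_eq_G2 (r q σ T A τ : ℝ) : m2 r q σ (T - τ) T A = G2 r q σ T A τ := by
  simp only [m2, G2, sub_sub_cancel]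

lemma hasDerivAt_m1_x (r q t u x : ℝ) :
    HasDerivAt (fun y => m1 r q t u y) (t / u * Real.exp (-(r - q) * (u - t))) x := by
  unfold m1
  simpa using (((hasDerivAt_id x).mul_const (t / u)).mul_const
    (Real.exp (-(r - q) * (u - t)))).add_const ((1 - Real.exp (-(r - q) * (u - t))) / ((r - q) * u))

lemma hasDerivAt_m2_x (r q σ t u x : ℝ) :
    HasDerivAt (fun y => m2 r q σ t u y)
      (2 * x * (t ^ 2 / u ^ 2) * Real.exp (-2 * (r - q - σ ^ 2 / 2) * (u - t))
        + 2 * t * Real.exp (-(r - q) * (u - t)) / (u ^ 2 * (r - q))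
            * (1 - Real.exp (-(r - q) * (u - t)))) x := by
  unfold m2
  have h := ((((hasDerivAt_pow 2 x).mul_const (t ^ 2 / u ^ 2)).mul_const
      (Real.exp (-2 * (r - q - σ ^ 2 / 2) * (u - t)))).add
    (((hasDerivAt_id x).mul_const
        (2 * t * Real.exp (-(r - q) * (u - t)) / (u ^ 2 * (r - q)))).mul_const
      (1 - Real.exp (-(r - q) * (u - t))))).add_const
    (((r - q - σ ^ 2) - 2 * (r - q - σ ^ 2 / 2) * Real.exp (-(r - q) * (u - t))
        + (r - q) * Real.exp (-2 * (r - q - σ ^ 2 / 2) * (u - t)))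
      / (u ^ 2 * (r - q) * (r - q - σ ^ 2 / 2) * (r - q - σ ^ 2)))
  refine h.congr_deriv ?_
  push_cast
  ring

lemma hasDerivAt_alphaA_x (r q σ t u x : ℝ) (hm1 : m1 r q t u x ≠ 0)
    (hm2 : m2 r q σ t u x ≠ 0) :
    HasDerivAt (fun y => alphaA r q σ t u y)
      (2 * (t / u * Real.exp (-(r - q) * (u - t)) / m1 r q t u x)
        - 1 / 2 * ((2 * x * (t ^ 2 / u ^ 2) * Real.exp (-2 * (r - q - σ ^ 2 / 2) * (u - t))
            + 2 * t * Real.exp (-(r - q) * (u - t)) / (u ^ 2 * (r - q))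
                * (1 - Real.exp (-(r - q) * (u - t)))) / m2 r q σ t u x)) x := by
  unfold alphaA
  exact (((hasDerivAt_m1_x r q t u x).log hm1).const_mul 2).sub
    (((hasDerivAt_m2_x r q σ t u x).log hm2).const_mul (1 / 2))

lemma hasDerivAt_betaA2_x (r q σ t u x : ℝ) (hm1 : m1 r q t u x ≠ 0)
    (hm2 : m2 r q σ t u x ≠ 0) :
    HasDerivAt (fun y => betaA2 r q σ t u y)
      ((2 * x * (t ^ 2 / u ^ 2) * Real.exp (-2 * (r - q - σ ^ 2 / 2) * (u - t))
            + 2 * t * Real.exp (-(r - q) * (u - t)) / (u ^ 2 * (r - q))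
                * (1 - Real.exp (-(r - q) * (u - t)))) / m2 r q σ t u x
        - 2 * (t / u * Real.exp (-(r - q) * (u - t)) / m1 r q t u x)) x := by
  unfold betaA2
  exact ((hasDerivAt_m2_x r q σ t u x).log hm2).sub
    (((hasDerivAt_m1_x r q t u x).log hm1).const_mul 2)

lemma derivx_alphaA_eq (r q σ T A τ : ℝ) (hg1 : G1 r q T A τ ≠ 0)
    (hg2 : G2 r q σ T A τ ≠ 0) :
    deriv (fun x => alphaA r q σ (T - τ) T x) A
      = 2 * (Pf r q T τ / G1 r q T A τ)
        - 1 / 2 * (M2X r q σ T A τ / G2 r q σ T A τ) := by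
  have hm1 : m1 r q (T - τ) T A ≠ 0 := by rw [m1_eq_G1]; exact hg1
  have hm2 : m2 r q σ (T - τ) T A ≠ 0 := by rw [m2_eq_G2]; exact hg2
  have h := (hasDerivAt_alphaA_x r q σ (T - τ) T A hm1 hm2).deriv
  rw [h, m1_eq_G1, m2_eq_G2]
  simp only [Pf, M2X, sub_sub_cancel]

lemma derivx_betaA2_eq (r q σ T A τ : ℝ) (hg1 : G1 r q T A τ ≠ 0)
    (hg2 : G2 r q σ T A τ ≠ 0) :
    deriv (fun x => betaA2 r q σ (T - τ) T x) A
      = M2X r q σ T A τ / G2 r q σ T A τ - 2 * (Pf r q T τ / G1 r q T A τ) := by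
  have hm1 : m1 r q (T - τ) T A ≠ 0 := by rw [m1_eq_G1]; exact hg1
  have hm2 : m2 r q σ (T - τ) T A ≠ 0 := by rw [m2_eq_G2]; exact hg2
  have h := (hasDerivAt_betaA2_x r q σ (T - τ) T A hm1 hm2).deriv
  rw [h, m1_eq_G1, m2_eq_G2]
  simp only [Pf, M2X, sub_sub_cancel]

lemma contDiff_exp_lin (a : ℝ) : ContDiff ℝ (⊤ : ℕ∞) (fun τ : ℝ => Real.exp (a * τ)) :=
  (contDiff_const.mul contDiff_id).exp

lemma hasDerivAt_exp_lin (a : ℝ) : HasDerivAt (fun τ : ℝ => Real.exp (a * τ)) a 0 := by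
  simpa using ((hasDerivAt_id (0:ℝ)).const_mul a).exp

lemma contDiff_G1 (r q T A : ℝ) : ContDiff ℝ (⊤ : ℕ∞) (G1 r q T A) := by
  unfold G1
  exact ((contDiff_const.mul ((contDiff_const.sub contDiff_id).div_const T)).mul
      (contDiff_exp_lin (-(r - q)))).add
    ((contDiff_const.sub (contDiff_exp_lin (-(r - q)))).div_const _)

lemma contDiff_G2 (r q σ T A : ℝ) : ContDiff ℝ (⊤ : ℕ∞) (G2 r q σ T A) := by
  unfold G2
  exact (((contDiff_const.mul (((contDiff_const.sub contDiff_id).pow 2).div_const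
        (T ^ 2))).mul (contDiff_exp_lin (-2 * (r - q - σ ^ 2 / 2)))).add
      ((contDiff_const.mul ((((contDiff_const.mul (contDiff_const.sub contDiff_id)).mul
          (contDiff_exp_lin (-(r - q)))).div_const _))).mul
        (contDiff_const.sub (contDiff_exp_lin (-(r - q)))))).add
    (((contDiff_const.sub (contDiff_const.mul (contDiff_exp_lin (-(r - q))))).add
        (contDiff_const.mul (contDiff_exp_lin (-2 * (r - q - σ ^ 2 / 2))))).div_const _)

lemma contDiff_Pf (r q T : ℝ) : ContDiff ℝ (⊤ : ℕ∞) (Pf r q T) := by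
  unfold Pf
  exact ((contDiff_const.sub contDiff_id).div_const T).mul (contDiff_exp_lin (-(r - q)))

lemma contDiff_M2X (r q σ T A : ℝ) : ContDiff ℝ (⊤ : ℕ∞) (M2X r q σ T A) := by
  unfold M2X
  exact ((contDiff_const.mul (((contDiff_const.sub contDiff_id).pow 2).div_const
        (T ^ 2))).mul (contDiff_exp_lin (-2 * (r - q - σ ^ 2 / 2)))).add
    ((((contDiff_const.mul (contDiff_const.sub contDiff_id)).mul
        (contDiff_exp_lin (-(r - q)))).div_const _).mul
      (contDiff_const.sub (contDiff_exp_lin (-(r - q)))))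

lemma G1_zero (r q T A : ℝ) (hT : T ≠ 0) : G1 r q T A 0 = A := by
  simp [G1, Real.exp_zero, sub_zero, div_self hT]

lemma G2_zero (r q σ T A : ℝ) (hT : T ≠ 0) (hc : r - q ≠ 0)
    (h1 : r - q - σ ^ 2 / 2 ≠ 0) (h2 : r - q - σ ^ 2 ≠ 0) :
    G2 r q σ T A 0 = A ^ 2 := by
  simp only [G2, Real.exp_zero, sub_zero, mul_one, mul_zero]
  field_simp
  try ring
  try exact Or.inl trivial

lemma Pf_zero (r q T : ℝ) (hT : T ≠ 0) : Pf r q T 0 = 1 := by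
  simp [Pf, Real.exp_zero, sub_zero, div_self hT]

lemma M2X_zero (r q σ T A : ℝ) (hT : T ≠ 0) : M2X r q σ T A 0 = 2 * A := by
  simp only [M2X, Real.exp_zero, sub_zero, mul_one, sub_self, mul_zero, add_zero]
  field_simp

lemma hasDerivAt_G1_zero (r q T A : ℝ) (hT : T ≠ 0) (hc : r - q ≠ 0) :
    HasDerivAt (G1 r q T A) (1 / T - A / T - A * (r - q)) 0 := by
  unfold G1
  have h := ((((hasDerivAt_const (0:ℝ) T).sub (hasDerivAt_id 0)).div_const T).const_mul
      A).mul (hasDerivAt_exp_lin (-(r - q))) |>.add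
    (((hasDerivAt_const (0:ℝ) 1).sub (hasDerivAt_exp_lin (-(r - q)))).div_const
      ((r - q) * T))
  refine h.congr_deriv ?_
  simp [Real.exp_zero]
  field_simp
  ring

lemma hasDerivAt_G2_zero (r q σ T A : ℝ) (hT : T ≠ 0) (hc : r - q ≠ 0)
    (h1 : r - q - σ ^ 2 / 2 ≠ 0) (h2 : r - q - σ ^ 2 ≠ 0) :
    HasDerivAt (G2 r q σ T A)
      (2 * A / T - 2 * A ^ 2 / T - 2 * A ^ 2 * (r - q - σ ^ 2 / 2)) 0 := by
  unfold G2
  have e1 := hasDerivAt_exp_lin (-(r - q))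
  have e2 := hasDerivAt_exp_lin (-2 * (r - q - σ ^ 2 / 2))
  have hTτ : HasDerivAt (fun τ : ℝ => T - τ) (0 - 1) 0 :=
    (hasDerivAt_const (0:ℝ) T).sub (hasDerivAt_id 0)
  have t1 := (((hTτ.pow 2).div_const (T ^ 2)).const_mul (A ^ 2)).mul e2
  have t2 := (((((hTτ.const_mul 2).mul e1).div_const (T ^ 2 * (r - q))).const_mul A).mul
    ((hasDerivAt_const (0:ℝ) 1).sub e1))
  have t3 := ((((hasDerivAt_const (0:ℝ) (r - q - σ ^ 2)).sub
      (e1.const_mul (2 * (r - q - σ ^ 2 / 2)))).add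
    (e2.const_mul (r - q))).div_const
      (T ^ 2 * (r - q) * (r - q - σ ^ 2 / 2) * (r - q - σ ^ 2)))
  have h := (t1.add t2).add t3
  refine h.congr_deriv ?_
  simp [Real.exp_zero]
  field_simp
  ring

lemma hasDerivAt_Pf_zero (r q T : ℝ) (hT : T ≠ 0) :
    HasDerivAt (Pf r q T) (-(1 / T) - (r - q)) 0 := by
  unfold Pf
  have h := ((((hasDerivAt_const (0:ℝ) T).sub (hasDerivAt_id 0)).div_const T)).mul
    (hasDerivAt_exp_lin (-(r - q)))
  refine h.congr_deriv ?_
  simp [Real.exp_zero]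
  field_simp
  ring

lemma hasDerivAt_M2X_zero (r q σ T A : ℝ) (hT : T ≠ 0) (hc : r - q ≠ 0) :
    HasDerivAt (M2X r q σ T A)
      (2 / T - 4 * A / T - 4 * A * (r - q - σ ^ 2 / 2)) 0 := by
  unfold M2X
  have e1 := hasDerivAt_exp_lin (-(r - q))
  have e2 := hasDerivAt_exp_lin (-2 * (r - q - σ ^ 2 / 2))
  have hTτ : HasDerivAt (fun τ : ℝ => T - τ) (0 - 1) 0 :=
    (hasDerivAt_const (0:ℝ) T).sub (hasDerivAt_id 0)
  have t1 := (((hTτ.pow 2).div_const (T ^ 2)).const_mul (2 * A)).mul e2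
  have t2 := ((((hTτ.const_mul 2).mul e1).div_const (T ^ 2 * (r - q))).mul
    ((hasDerivAt_const (0:ℝ) 1).sub e1))
  have h := t1.add t2
  refine h.congr_deriv ?_
  simp [Real.exp_zero]
  field_simp
  ring

noncomputable def Phi2 (r q σ T A τ : ℝ) : ℝ :=
  2 * (Pf r q T τ / G1 r q T A τ) - 1 / 2 * (M2X r q σ T A τ / G2 r q σ T A τ)

noncomputable def Kf (r q σ T A τ : ℝ) : ℝ :=
  M2X r q σ T A τ / G2 r q σ T A τ - 2 * (Pf r q T τ / G1 r q T A τ)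

noncomputable def D1f (r q σ T A τ : ℝ) : ℝ :=
  2 * (deriv (G1 r q T A) τ / G1 r q T A τ)
    - 1 / 2 * (deriv (G2 r q σ T A) τ / G2 r q σ T A τ)

noncomputable def DPhi2 (r q σ T A τ : ℝ) : ℝ :=
  2 * ((deriv (Pf r q T) τ * G1 r q T A τ - Pf r q T τ * deriv (G1 r q T A) τ)
        / G1 r q T A τ ^ 2)
    - 1 / 2 * ((deriv (M2X r q σ T A) τ * G2 r q σ T A τ
          - M2X r q σ T A τ * deriv (G2 r q σ T A) τ) / G2 r q σ T A τ ^ 2)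

lemma alphaA_tau_eq (r q σ T A : ℝ) :
    (fun τ : ℝ => alphaA r q σ (T - τ) T A)
      = fun τ => 2 * Real.log (G1 r q T A τ) - 1 / 2 * Real.log (G2 r q σ T A τ) := by
  funext τ
  rw [alphaA, m1_eq_G1, m2_eq_G2]

lemma betaA2_tau_eq (r q σ T A : ℝ) (τ : ℝ) :
    betaA2 r q σ (T - τ) T A
      = Real.log (G2 r q σ T A τ) - 2 * Real.log (G1 r q T A τ) := by
  rw [betaA2, m1_eq_G1, m2_eq_G2]

lemma deriv_alphaA_tau_eq (r q σ T A τ : ℝ) (hg1 : G1 r q T A τ ≠ 0)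
    (hg2 : G2 r q σ T A τ ≠ 0) :
    deriv (fun τ' : ℝ => alphaA r q σ (T - τ') T A) τ = D1f r q σ T A τ := by
  rw [alphaA_tau_eq]
  have d1 := ((contDiff_G1 r q T A).differentiable (by simp) τ).hasDerivAt
  have d2 := ((contDiff_G2 r q σ T A).differentiable (by simp) τ).hasDerivAt
  exact (((d1.log hg1).const_mul 2).sub ((d2.log hg2).const_mul (1 / 2))).deriv

lemma hasDerivAt_Phi2 (r q σ T A τ : ℝ) (hg1 : G1 r q T A τ ≠ 0)
    (hg2 : G2 r q σ T A τ ≠ 0) :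
    HasDerivAt (fun τ' => Phi2 r q σ T A τ') (DPhi2 r q σ T A τ) τ := by
  unfold Phi2 DPhi2
  have dP := ((contDiff_Pf r q T).differentiable (by simp) τ).hasDerivAt
  have dM := ((contDiff_M2X r q σ T A).differentiable (by simp) τ).hasDerivAt
  have d1 := ((contDiff_G1 r q T A).differentiable (by simp) τ).hasDerivAt
  have d2 := ((contDiff_G2 r q σ T A).differentiable (by simp) τ).hasDerivAt
  exact (((dP.div d1 hg1).const_mul 2).sub (((dM.div d2 hg2).const_mul (1 / 2))))

noncomputable def Bf (r q σ T A τ : ℝ) : ℝ :=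
  Real.log (G2 r q σ T A τ) - 2 * Real.log (G1 r q T A τ)

lemma betaA2_eq_Bf (r q σ T A τ : ℝ) :
    betaA2 r q σ (T - τ) T A = Bf r q σ T A τ := betaA2_tau_eq r q σ T A τ


/-- With `a(τ,x) = α^a(T−τ,T,x)`, `b²(τ,x) = (β^a)²(T−τ,T,x)` and
`A = (q+1/T)/(r+1/T)`, assuming `b²(τ,A) > 0` for all sufficiently small `τ > 0`:
(i) `lim_{τ→0⁺} [∂_τ a(τ,A)·∂_x a(τ,A) + ∂²_{x,τ} a(τ,A)] = (1/A)(q − r − 1/T − σ²/2)`;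
(ii) `lim_{τ→0⁺} ∂_x b²(τ,A)/(2√(b²(τ,A))) = 0`. -/
theorem tendsto_alphaA_mixed_derivs_and_betaA_deriv (r q σ T : ℝ)
    (hσ : 0 < σ) (hT : 0 < T) (hq : 0 ≤ q) (hrq : q < r)
    (h1 : r - q - σ ^ 2 / 2 ≠ 0) (h2 : r - q - σ ^ 2 ≠ 0)
    (A : ℝ) (hA : A = (q + 1 / T) / (r + 1 / T))
    (hpos : ∃ ε > (0:ℝ), ∀ τ ∈ Set.Ioo (0:ℝ) ε, 0 < betaA2 r q σ (T - τ) T A) :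
    Tendsto (fun τ : ℝ =>
        deriv (fun τ' : ℝ => alphaA r q σ (T - τ') T A) τ
            * deriv (fun x : ℝ => alphaA r q σ (T - τ) T x) A
          + deriv (fun τ' : ℝ => deriv (fun x : ℝ => alphaA r q σ (T - τ') T x) A) τ)
      (𝓝[>] 0) (𝓝 ((1 / A) * (q - r - 1 / T - σ ^ 2 / 2))) ∧
    Tendsto (fun τ : ℝ =>
        deriv (fun x : ℝ => betaA2 r q σ (T - τ) T x) A
          / (2 * Real.sqrt (betaA2 r q σ (T - τ) T A)))
      (𝓝[>] 0) (𝓝 0) := by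
  have hT' : T ≠ 0 := ne_of_gt hT
  have hr : 0 < r := lt_of_le_of_lt hq hrq
  have hc0 : (0:ℝ) < r - q := sub_pos.mpr hrq
  have hc : r - q ≠ 0 := ne_of_gt hc0
  have hA0 : 0 < A := by
    rw [hA]
    have ha1 : 0 < q + 1 / T := by positivity
    have ha2 : 0 < r + 1 / T := by positivity
    exact div_pos ha1 ha2
  have hAne : A ≠ 0 := ne_of_gt hA0
  have hG1z := G1_zero r q T A hT'
  have hG2z := G2_zero r q σ T A hT' hc h1 h2
  have hPfz := Pf_zero r q T hT'
  have hM2Xz := M2X_zero r q σ T A hT'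
  have hG1zne : G1 r q T A 0 ≠ 0 := by rw [hG1z]; exact hAne
  have hG2zne : G2 r q σ T A 0 ≠ 0 := by rw [hG2z]; positivity
  have hG1cont : Continuous (G1 r q T A) := (contDiff_G1 r q T A).continuous
  have hG2cont : Continuous (G2 r q σ T A) := (contDiff_G2 r q σ T A).continuous
  have ev1 : ∀ᶠ τ in 𝓝 (0:ℝ), 0 < G1 r q T A τ := by
    have h := hG1cont.continuousAt (x := (0:ℝ))
    rw [ContinuousAt, hG1z] at h
    exact h.eventually (eventually_gt_nhds hA0)
  have ev2 : ∀ᶠ τ in 𝓝 (0:ℝ), 0 < G2 r q σ T A τ := by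
    have h := hG2cont.continuousAt (x := (0:ℝ))
    rw [ContinuousAt, hG2z] at h
    exact h.eventually (eventually_gt_nhds (by positivity : (0:ℝ) < A ^ 2))
  have ev12 : ∀ᶠ τ in 𝓝 (0:ℝ), 0 < G1 r q T A τ ∧ 0 < G2 r q σ T A τ := ev1.and ev2
  constructor
  · -- Part (i)
    have evq : ∀ᶠ τ in 𝓝[>] (0:ℝ),
        D1f r q σ T A τ * Phi2 r q σ T A τ + DPhi2 r q σ T A τ
          = deriv (fun τ' : ℝ => alphaA r q σ (T - τ') T A) τ
              * deriv (fun x : ℝ => alphaA r q σ (T - τ) T x) A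
            + deriv (fun τ' : ℝ => deriv (fun x : ℝ => alphaA r q σ (T - τ') T x) A) τ := by
      filter_upwards [(ev12.and ev12.eventually_nhds).filter_mono nhdsWithin_le_nhds]
        with τ hτ
      obtain ⟨⟨hg1, hg2⟩, hnb⟩ := hτ
      have e1 := deriv_alphaA_tau_eq r q σ T A τ hg1.ne' hg2.ne'
      have e2 := derivx_alphaA_eq r q σ T A τ hg1.ne' hg2.ne'
      have e3 : deriv (fun τ' : ℝ => deriv (fun x : ℝ => alphaA r q σ (T - τ') T x) A) τ
          = DPhi2 r q σ T A τ := by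
        have heq : (fun τ' : ℝ => deriv (fun x : ℝ => alphaA r q σ (T - τ') T x) A)
            =ᶠ[𝓝 τ] fun τ' => Phi2 r q σ T A τ' := by
          filter_upwards [hnb] with τ' h'
          rw [derivx_alphaA_eq r q σ T A τ' h'.1.ne' h'.2.ne', Phi2]
        rw [heq.deriv_eq, (hasDerivAt_Phi2 r q σ T A τ hg1.ne' hg2.ne').deriv]
      rw [e1, e2, e3, Phi2]
    have hDG1 := (hasDerivAt_G1_zero r q T A hT' hc).deriv
    have hDG2 := (hasDerivAt_G2_zero r q σ T A hT' hc h1 h2).deriv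
    have hDPf := (hasDerivAt_Pf_zero r q T hT').deriv
    have hDM2X := (hasDerivAt_M2X_zero r q σ T A hT' hc).deriv
    have hG1sqne : G1 r q T A 0 ^ 2 ≠ 0 := pow_ne_zero _ hG1zne
    have hG2sqne : G2 r q σ T A 0 ^ 2 ≠ 0 := pow_ne_zero _ hG2zne
    have cd1 : Continuous (deriv (G1 r q T A)) :=
      (contDiff_G1 r q T A).continuous_deriv (mod_cast le_top)
    have cd2 : Continuous (deriv (G2 r q σ T A)) :=
      (contDiff_G2 r q σ T A).continuous_deriv (mod_cast le_top)
    have cdP : Continuous (deriv (Pf r q T)) := (contDiff_Pf r q T).continuous_deriv (mod_cast le_top)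
    have cdM : Continuous (deriv (M2X r q σ T A)) :=
      (contDiff_M2X r q σ T A).continuous_deriv (mod_cast le_top)
    have cP : Continuous (Pf r q T) := (contDiff_Pf r q T).continuous
    have cM : Continuous (M2X r q σ T A) := (contDiff_M2X r q σ T A).continuous
    have hcont : ContinuousAt (fun τ => D1f r q σ T A τ * Phi2 r q σ T A τ
        + DPhi2 r q σ T A τ) 0 := by
      unfold D1f Phi2 DPhi2
      exact (((continuousAt_const.mul (cd1.continuousAt.div hG1cont.continuousAt
            hG1zne)).sub (continuousAt_const.mul (cd2.continuousAt.div
            hG2cont.continuousAt hG2zne))).mul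
          ((continuousAt_const.mul (cP.continuousAt.div hG1cont.continuousAt
              hG1zne)).sub (continuousAt_const.mul (cM.continuousAt.div
              hG2cont.continuousAt hG2zne)))).add
        ((continuousAt_const.mul (((cdP.continuousAt.mul hG1cont.continuousAt).sub
              (cP.continuousAt.mul cd1.continuousAt)).div
            (hG1cont.continuousAt.pow 2) hG1sqne)).sub
          (continuousAt_const.mul (((cdM.continuousAt.mul hG2cont.continuousAt).sub
              (cM.continuousAt.mul cd2.continuousAt)).div
            (hG2cont.continuousAt.pow 2) hG2sqne)))
    have hval : D1f r q σ T A 0 * Phi2 r q σ T A 0 + DPhi2 r q σ T A 0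
        = 1 / A * (q - r - 1 / T - σ ^ 2 / 2) := by
      unfold D1f Phi2 DPhi2
      rw [hDG1, hDG2, hDPf, hDM2X, hG1z, hG2z, hPfz, hM2Xz]
      field_simp
      ring
    have hlim := hcont.tendsto.mono_left (nhdsWithin_le_nhds : 𝓝[>] (0:ℝ) ≤ 𝓝 0)
    rw [hval] at hlim
    exact Tendsto.congr' evq hlim
  · -- Part (ii)
    obtain ⟨ε₂, hε₂, hposB⟩ := hpos
    have evB : ∀ᶠ τ in 𝓝[>] (0:ℝ), 0 < Bf r q σ T A τ := by
      filter_upwards [(eventually_lt_nhds hε₂).filter_mono nhdsWithin_le_nhds,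
        self_mem_nhdsWithin] with τ ha hb
      have := hposB τ ⟨hb, ha⟩
      rwa [betaA2_eq_Bf] at this
    have hB0 : Bf r q σ T A 0 = 0 := by
      unfold Bf; rw [hG1z, hG2z, Real.log_pow]; push_cast; ring
    have hBd : HasDerivAt (Bf r q σ T A) (σ ^ 2) 0 := by
      unfold Bf
      have h := ((hasDerivAt_G2_zero r q σ T A hT' hc h1 h2).log hG2zne).sub
        (((hasDerivAt_G1_zero r q T A hT' hc).log hG1zne).const_mul 2)
      refine h.congr_deriv ?_
      rw [hG1z, hG2z]
      field_simp
      ring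
    have hK0 : Kf r q σ T A 0 = 0 := by
      unfold Kf; rw [hG1z, hG2z, hPfz, hM2Xz]; field_simp; ring
    have hKdiff : DifferentiableAt ℝ (Kf r q σ T A) 0 := by
      unfold Kf
      have dM : DifferentiableAt ℝ (M2X r q σ T A) 0 :=
        (contDiff_M2X r q σ T A).differentiable (by simp) 0
      have dG2 : DifferentiableAt ℝ (G2 r q σ T A) 0 :=
        (contDiff_G2 r q σ T A).differentiable (by simp) 0
      have dP : DifferentiableAt ℝ (Pf r q T) 0 :=
        (contDiff_Pf r q T).differentiable (by simp) 0
      have dG1 : DifferentiableAt ℝ (G1 r q T A) 0 :=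
        (contDiff_G1 r q T A).differentiable (by simp) 0
      exact (dM.div dG2 hG2zne).sub ((dP.div dG1 hG1zne).const_mul 2)
    have hKd : HasDerivAt (Kf r q σ T A) (deriv (Kf r q σ T A) 0) 0 := hKdiff.hasDerivAt
    have hmono : 𝓝[>] (0:ℝ) ≤ 𝓝[≠] (0:ℝ) :=
      nhdsWithin_mono 0 fun x hx => ne_of_gt hx
    have hKslope : Tendsto (fun τ => Kf r q σ T A τ / τ) (𝓝[>] (0:ℝ))
        (𝓝 (deriv (Kf r q σ T A) 0)) := by
      have h := (hasDerivAt_iff_tendsto_slope.mp hKd).mono_left hmono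
      refine h.congr fun τ => ?_
      rw [slope_def_field, hK0, sub_zero, sub_zero]
    have hBslope : Tendsto (fun τ => Bf r q σ T A τ / τ) (𝓝[>] (0:ℝ)) (𝓝 (σ ^ 2)) := by
      have h := (hasDerivAt_iff_tendsto_slope.mp hBd).mono_left hmono
      refine h.congr fun τ => ?_
      rw [slope_def_field, hB0, sub_zero, sub_zero]
    have hσ2 : (σ:ℝ) ^ 2 ≠ 0 := by positivity
    have hinv : Tendsto (fun τ => τ / Bf r q σ T A τ) (𝓝[>] (0:ℝ)) (𝓝 ((σ ^ 2)⁻¹)) := by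
      have h := hBslope.inv₀ hσ2
      refine h.congr fun τ => ?_
      rw [inv_div]
    have hratio : Tendsto (fun τ => Real.sqrt τ / (2 * Real.sqrt (Bf r q σ T A τ)))
        (𝓝[>] (0:ℝ)) (𝓝 (1 / 2 * Real.sqrt ((σ ^ 2)⁻¹))) := by
      have h := Tendsto.const_mul (1/2 : ℝ)
        ((Real.continuous_sqrt.tendsto _).comp hinv)
      refine Tendsto.congr' ?_ h
      filter_upwards [self_mem_nhdsWithin] with τ hτ
      have hτ0 : (0:ℝ) < τ := hτ
      rw [Function.comp, Real.sqrt_div hτ0.le]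
      ring
    have hsqrtτ : Tendsto (fun τ => Real.sqrt τ) (𝓝[>] (0:ℝ)) (𝓝 0) := by
      have h := (Real.continuous_sqrt.tendsto 0).mono_left
        (nhdsWithin_le_nhds : 𝓝[>] (0:ℝ) ≤ 𝓝 0)
      simpa using h
    have hprod := hKslope.mul (hsqrtτ.mul hratio)
    have evq2 : ∀ᶠ τ in 𝓝[>] (0:ℝ),
        Kf r q σ T A τ / τ * (Real.sqrt τ * (Real.sqrt τ / (2 * Real.sqrt (Bf r q σ T A τ))))
          = deriv (fun x : ℝ => betaA2 r q σ (T - τ) T x) A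
              / (2 * Real.sqrt (betaA2 r q σ (T - τ) T A)) := by
      filter_upwards [ev12.filter_mono nhdsWithin_le_nhds, self_mem_nhdsWithin, evB]
        with τ hg hτ hB
      have hτ0 : (0:ℝ) < τ := hτ
      rw [derivx_betaA2_eq r q σ T A τ hg.1.ne' hg.2.ne', betaA2_eq_Bf]
      have hs : Real.sqrt τ * Real.sqrt τ = τ := Real.mul_self_sqrt hτ0.le
      have hsB : Real.sqrt (Bf r q σ T A τ) ≠ 0 := ne_of_gt (Real.sqrt_pos.mpr hB)
      show Kf r q σ T A τ / τ * (Real.sqrt τ * (Real.sqrt τ / (2 * Real.sqrt (Bf r q σ T A τ))))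
        = Kf r q σ T A τ / (2 * Real.sqrt (Bf r q σ T A τ))
      have hcalc : Kf r q σ T A τ / τ
            * (Real.sqrt τ * (Real.sqrt τ / (2 * Real.sqrt (Bf r q σ T A τ))))
          = Kf r q σ T A τ * (Real.sqrt τ * Real.sqrt τ)
            / (τ * (2 * Real.sqrt (Bf r q σ T A τ))) := by ring
      rw [hcalc, hs, mul_comm (Kf r q σ T A τ) τ, mul_div_mul_left _ _ (ne_of_gt hτ0)]
    have hres := Tendsto.congr' evq2 hprod
    simpa using hres
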